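/- Let L be a closed subspace of E = ℓ²(X) and X₀ ⊆ X finite. If L ∩ E_{X₀'} = {0} and L^⊥ ∩ E_{X₀} = {0} for disjoint finite X₀, X₀', then for any partition X₀ = X₁ ⊔ X₂, the subspace L ∩ E_{X∖X₁} satisfies (L ∩ E_{X∖X₁}) ∩ E_{X₀'} = {0} and (L ∩ E_{X∖X₁})^⊥ ∩ E_{X₂} = {0}, where the orthogonal complement is taken inside E_{X∖X₁}. -/

import Mathlib

/-!
Write `K = E_{X₁}`. Then `E_{X∖X₁} = Kᗮ`, and since `K` is finite-dimensional and `L` is closed,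
`(L ⊓ Kᗮ)ᗮ = Lᗮ ⊔ K` with no closure needed. A vector `v ∈ E_{X₂}` orthogonal to `L ⊓ Kᗮ` is
therefore `a + c` with `a ∈ Lᗮ`, `c ∈ K`; then `a = v - c ∈ Lᗮ ⊓ E_{X₀} = 0`, so `v = c` lies in
`E_{X₁} ⊓ E_{X₂} = 0`. The first claim is immediate from `L ⊓ E_{X₀'} = 0`.
-/

noncomputable section

variable {X : Type*} [DecidableEq X]

/-- The canonical basis vector `e_x` of `ℓ²(X)`. -/
def basisVec (x : X) : lp (fun _ : X => ℂ) 2 := lp.single 2 x 1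

/-- `E_A`: the closed linear span of the basis vectors indexed by `A`. -/
def spanE (A : Set X) : Submodule ℂ (lp (fun _ : X => ℂ) 2) :=
  (Submodule.span ℂ (basisVec '' A)).topologicalClosure

/-- The `(X₀,X₀')`-reduction `L_{X₀,X₀'} = (L + E_{X₀'}) ∩ E_{X∖(X₀⊔X₀')}` of `L`. -/
def reduction (L : Submodule ℂ (lp (fun _ : X => ℂ) 2)) (X₀ X₀' : Set X) :
    Submodule ℂ (lp (fun _ : X => ℂ) 2) :=
  (L ⊔ spanE X₀') ⊓ spanE (X₀ ∪ X₀')ᶜ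

open Submodule

section OrthogonalInf

variable {𝕜 E : Type*} [RCLike 𝕜] [NormedAddCommGroup E] [InnerProductSpace 𝕜 E] [CompleteSpace E]

theorem Submodule.orthogonal_inf_orthogonal_eq_sup {L K : Submodule 𝕜 E}
    (hL : IsClosed (L : Set E)) [FiniteDimensional 𝕜 K] :
    (L ⊓ Kᗮ)ᗮ = Lᗮ ⊔ K := by
  have hLL : Lᗮᗮ = L := by
    rw [orthogonal_orthogonal_eq_closure, hL.submodule_topologicalClosure_eq]
  calc (L ⊓ Kᗮ)ᗮ = (Lᗮᗮ ⊓ Kᗮ)ᗮ := by rw [hLL]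
    _ = (Lᗮ ⊔ K).topologicalClosure := by
      rw [inf_orthogonal, orthogonal_orthogonal_eq_closure]
    _ = Lᗮ ⊔ K :=
      IsClosed.submodule_topologicalClosure_eq
        (isClosed_sup_finiteDimensional Lᗮ K L.isClosed_orthogonal)

theorem Submodule.orthogonal_inf_orthogonal_inf_eq_bot {L K₁ K₂ : Submodule 𝕜 E}
    (hL : IsClosed (L : Set E)) [FiniteDimensional 𝕜 K₁] (h₁₂ : K₁ ⊓ K₂ = ⊥)
    (hreg : Lᗮ ⊓ (K₁ ⊔ K₂) = ⊥) :
    (L ⊓ K₁ᗮ)ᗮ ⊓ K₂ = ⊥ := by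
  refine eq_bot_iff.mpr fun v ⟨hv, hv₂⟩ => ?_
  rw [SetLike.mem_coe, orthogonal_inf_orthogonal_eq_sup hL, mem_sup] at hv
  obtain ⟨a, ha, c, hc, rfl⟩ := hv
  have ha₀ : a = 0 := by
    have ha₁₂ : a ∈ K₁ ⊔ K₂ := by
      simpa using sub_mem (mem_sup_right hv₂ : a + c ∈ K₁ ⊔ K₂) (mem_sup_left hc)
    simpa [hreg] using mem_inf.mpr ⟨ha, ha₁₂⟩
  subst ha₀
  rw [zero_add] at hv₂ ⊢
  simpa [h₁₂] using mem_inf.mpr ⟨hc, hv₂⟩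

end OrthogonalInf

section SpanE

local notation "ℓ²" => lp (fun _ : X => ℂ) 2

theorem inner_basisVec_left (x : X) (v : ℓ²) : inner ℂ (basisVec x) v = v x := by
  simp [basisVec, lp.inner_single_left]

theorem basisVec_apply (x y : X) : basisVec x y = if y = x then 1 else 0 := by
  rw [basisVec, lp.single_apply, Pi.single_apply]

theorem mem_orthogonal_spanE {A : Set X} {v : ℓ²} : v ∈ (spanE A)ᗮ ↔ ∀ x ∈ A, v x = 0 := by
  rw [spanE, orthogonal_closure, ← span_singleton_le_iff_mem, ← isOrtho_iff_le, isOrtho_comm,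
    isOrtho_span]
  simp [inner_basisVec_left]

theorem mem_spanE_of_forall_notMem {A : Set X} {v : ℓ²} (hv : ∀ x ∉ A, v x = 0) :
    v ∈ spanE A := by
  have hsum : HasSum (fun x => v x • basisVec x) v := by
    simpa [basisVec, ← lp.single_smul] using lp.hasSum_single ENNReal.ofNat_ne_top v
  refine mem_closure_of_tendsto hsum (Filter.Eventually.of_forall fun s => ?_)
  refine sum_mem fun x _ => ?_
  by_cases hx : x ∈ A
  · exact smul_mem _ _ (subset_span ⟨x, hx, rfl⟩)
  · simp [hv x hx]

theorem spanE_compl (A : Set X) : spanE Aᶜ = (spanE A)ᗮ := by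
  refine le_antisymm ?_ fun v hv =>
    mem_spanE_of_forall_notMem fun x hx => mem_orthogonal_spanE.mp hv x (not_not.mp hx)
  refine topologicalClosure_minimal _ (span_le.mpr ?_) (spanE A).isClosed_orthogonal
  rintro _ ⟨x, hx, rfl⟩
  refine mem_orthogonal_spanE.mpr fun y hy => ?_
  simp [basisVec_apply, show y ≠ x from fun h => hx (h ▸ hy)]

theorem spanE_mono {A B : Set X} (h : A ⊆ B) : spanE A ≤ spanE B :=
  topologicalClosure_mono (span_mono (Set.image_mono h))

theorem finiteDimensional_spanE {A : Set X} (hA : A.Finite) : FiniteDimensional ℂ (spanE A) := by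
  have := FiniteDimensional.span_of_finite ℂ (hA.image basisVec)
  rwa [spanE, (span ℂ (basisVec '' A)).closed_of_finiteDimensional.submodule_topologicalClosure_eq]

end SpanE

theorem stmt10_general (L : Submodule ℂ (lp (fun _ : X => ℂ) 2))
    (hL : IsClosed (L : Set (lp (fun _ : X => ℂ) 2)))
    (X₀ X₀' X₁ X₂ : Set X) (hfin₀ : X₀.Finite)
    (hpart : X₀ = X₁ ∪ X₂) (hdisj' : Disjoint X₁ X₂)
    (hreg₁ : L ⊓ spanE X₀' = ⊥) (hreg₂ : Lᗮ ⊓ spanE X₀ = ⊥) :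
    (L ⊓ spanE X₁ᶜ) ⊓ spanE X₀' = ⊥ ∧
    ((L ⊓ spanE X₁ᶜ)ᗮ ⊓ spanE X₁ᶜ) ⊓ spanE X₂ = ⊥ := by
  subst hpart
  have : FiniteDimensional ℂ (spanE X₁) :=
    finiteDimensional_spanE (hfin₀.subset Set.subset_union_left)
  have hX₂ : spanE X₂ ≤ (spanE X₁)ᗮ := spanE_compl X₁ ▸ spanE_mono hdisj'.subset_compl_left
  have hsup : spanE X₁ ⊔ spanE X₂ ≤ spanE (X₁ ∪ X₂) :=
    sup_le (spanE_mono Set.subset_union_left) (spanE_mono Set.subset_union_right)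
  rw [spanE_compl]
  constructor
  · exact eq_bot_mono (inf_le_inf_right _ inf_le_left) hreg₁
  · refine eq_bot_mono (inf_le_inf_right _ inf_le_left)
      (orthogonal_inf_orthogonal_inf_eq_bot hL ?_ ?_)
    · exact eq_bot_mono (inf_le_inf_left _ hX₂) (inf_orthogonal_eq_bot _)
    · exact eq_bot_mono (inf_le_inf_left _ hsup) hreg₂

/-- If `L ∩ E_{X₀'} = 0` and `L^⊥ ∩ E_{X₀} = 0` with `X₀ = X₁ ⊔ X₂`, then
`L ∩ E_{X∖X₁}` has trivial intersection with `E_{X₀'}` and its orthogonal complement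
inside `E_{X∖X₁}` has trivial intersection with `E_{X₂}`. -/
theorem stmt10 (L : Submodule ℂ (lp (fun _ : X => ℂ) 2))
    (hL : IsClosed (L : Set (lp (fun _ : X => ℂ) 2)))
    (X₀ X₀' X₁ X₂ : Set X) (hfin₀ : X₀.Finite) (hfin₀' : X₀'.Finite)
    (hdisj : Disjoint X₀ X₀') (hpart : X₀ = X₁ ∪ X₂) (hdisj' : Disjoint X₁ X₂)
    (hreg₁ : L ⊓ spanE X₀' = ⊥) (hreg₂ : Lᗮ ⊓ spanE X₀ = ⊥) :
    (L ⊓ spanE X₁ᶜ) ⊓ spanE X₀' = ⊥ ∧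
    ((L ⊓ spanE X₁ᶜ)ᗮ ⊓ spanE X₁ᶜ) ⊓ spanE X₂ = ⊥ :=
  stmt10_general L hL X₀ X₀' X₁ X₂ hfin₀ hpart hdisj' hreg₁ hreg₂

end
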